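/- Let κ ∈ K_d and let D ⊆ L be κ-coherent with induced lower prevision P_D(f) := sup{μ ∈ ℝ : f − μ ∈ D} and upper prevision Q_D(f) := inf{μ ∈ ℝ : μ − f ∈ D}, and assume P_D(f) ≤ Q_D(f) for every gamble f. Then P_D(f) = Q_D(f) holds for every gamble f if and only if for every gamble f not in D and every ε > 0 the gamble ε − f belongs to D. -/

import Mathlib

open Set

/-- The set of gambles: bounded real-valued functions on `Ω`. -/
def Gambles (Ω : Type*) : Set (Ω → ℝ) := {f | ∃ M : ℝ, ∀ ω, |f ω| ≤ M}

/-- `L⁺`: the positive gambles. -/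
def Lpos (Ω : Type*) : Set (Ω → ℝ) := {f ∈ Gambles Ω | 0 ≤ f ∧ f ≠ 0}

/-- `L⁻₀`: the nonpositive gambles. -/
def Lneg0 (Ω : Type*) : Set (Ω → ℝ) := {f ∈ Gambles Ω | f ≤ 0}

/-- A closure operator on the subsets of the set of gambles. -/
structure IsClosureOp (Ω : Type*) (κ : Set (Ω → ℝ) → Set (Ω → ℝ)) : Prop where
  maps_to : ∀ D ⊆ Gambles Ω, κ D ⊆ Gambles Ω
  extensive : ∀ D ⊆ Gambles Ω, D ⊆ κ D
  mono : ∀ ⦃D D' : Set (Ω → ℝ)⦄, D ⊆ Gambles Ω → D' ⊆ Gambles Ω → D ⊆ D' → κ D ⊆ κ D'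
  idem : ∀ D ⊆ Gambles Ω, κ (κ D) = κ D

/-- Natural extension `E_κ(D) = κ(D ∪ L⁺)`. -/
def natExt {Ω : Type*} (κ : Set (Ω → ℝ) → Set (Ω → ℝ)) (D : Set (Ω → ℝ)) : Set (Ω → ℝ) :=
  κ (D ∪ Lpos Ω)

/-- `D` avoids partial loss: `L⁻₀ ∩ E_κ(D) = ∅`. -/
def AvoidsPartialLoss {Ω : Type*} (κ : Set (Ω → ℝ) → Set (Ω → ℝ)) (D : Set (Ω → ℝ)) : Prop :=
  Lneg0 Ω ∩ natExt κ D = ∅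

/-- `D` is κ-coherent relative to `Q`. -/
def CoherentRel {Ω : Type*} (κ : Set (Ω → ℝ) → Set (Ω → ℝ)) (Q D : Set (Ω → ℝ)) : Prop :=
  AvoidsPartialLoss κ D ∧ Q ∩ natExt κ D ⊆ D

/-- `D` is κ-coherent: `κ(D ∪ L⁺) = D` and `D ∩ L⁻₀ = ∅`. -/
def Coherent {Ω : Type*} (κ : Set (Ω → ℝ) → Set (Ω → ℝ)) (D : Set (Ω → ℝ)) : Prop :=
  D ⊆ Gambles Ω ∧ κ (D ∪ Lpos Ω) = D ∧ D ∩ Lneg0 Ω = ∅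

/-- A set of gambles is closed under dominance. -/
def ClosedUnderDominance {Ω : Type*} (G : Set (Ω → ℝ)) : Prop :=
  G = {g | g ∈ Gambles Ω ∧ ∃ f ∈ G, f ≤ g}

/-- `K_d`: closure operators all of whose coherent sets are closed under dominance. -/
def InKd {Ω : Type*} (κ : Set (Ω → ℝ) → Set (Ω → ℝ)) : Prop :=
  IsClosureOp Ω κ ∧ ∀ D : Set (Ω → ℝ), Coherent κ D → ClosedUnderDominance D

/-- Lower prevision induced by `D`: `P_D(f) = sup {μ : f - μ ∈ D}`. -/
noncomputable def lowPrev {Ω : Type*} (D : Set (Ω → ℝ)) (f : Ω → ℝ) : ℝ :=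
  sSup {μ : ℝ | (f - fun _ => μ) ∈ D}

/-- Upper prevision induced by `D`: `Q_D(f) = inf {μ : μ - f ∈ D}`. -/
noncomputable def upPrev {Ω : Type*} (D : Set (Ω → ℝ)) (f : Ω → ℝ) : ℝ :=
  sInf {μ : ℝ | ((fun _ => μ) - f) ∈ D}

/-!
Both directions only use that a coherent `D` contains `L⁺`, misses `L⁻₀` and is closed under
dominance. If `P_D = Q_D` and `f ∉ D`, dominance gives `P_D(f) ≤ 0`, hence `Q_D(f) < ε`, and some
`μ < ε` with `μ - f ∈ D` dominates `ε - f`. Conversely, if `μ > P_D(f)` then `f - μ ∉ D`, so the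
hypothesis puts `ε - (f - μ) = (μ + ε) - f` in `D` and `Q_D(f) ≤ μ + ε`; thus `Q_D ≤ P_D`.
-/

theorem const_mem_gambles (Ω : Type*) (c : ℝ) : (fun _ => c) ∈ Gambles Ω :=
  ⟨|c|, fun _ => le_rfl⟩

theorem sub_mem_gambles {Ω : Type*} {f g : Ω → ℝ} (hf : f ∈ Gambles Ω) (hg : g ∈ Gambles Ω) :
    f - g ∈ Gambles Ω := by
  obtain ⟨M, hM⟩ := hf
  obtain ⟨N, hN⟩ := hg
  exact ⟨M + N, fun ω => (abs_sub (f ω) (g ω)).trans (add_le_add (hM ω) (hN ω))⟩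

theorem mem_lpos_of_pos {Ω : Type*} [Nonempty Ω] {g : Ω → ℝ} (hg : g ∈ Gambles Ω)
    (hpos : ∀ ω, 0 < g ω) : g ∈ Lpos Ω := by
  refine ⟨hg, fun ω => (hpos ω).le, fun h => ?_⟩
  obtain ⟨ω⟩ := ‹Nonempty Ω›
  exact (hpos ω).ne' (congrFun h ω)

namespace Coherent

variable {Ω : Type*} {κ : Set (Ω → ℝ) → Set (Ω → ℝ)} {D : Set (Ω → ℝ)}

theorem lpos_subset (hκ : IsClosureOp Ω κ) (hD : Coherent κ D) : Lpos Ω ⊆ D := by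
  have hsub : D ∪ Lpos Ω ⊆ Gambles Ω := union_subset hD.1 fun _ hf => hf.1
  intro f hf
  simpa only [hD.2.1] using hκ.extensive _ hsub (Or.inr hf)

theorem exists_pos (hD : Coherent κ D) {g : Ω → ℝ} (hg : g ∈ D) : ∃ ω, 0 < g ω := by
  by_contra! hle
  exact (eq_empty_iff_forall_notMem.1 hD.2.2) g ⟨hg, hD.1 hg, hle⟩

theorem mem_of_le (hκ : InKd κ) (hD : Coherent κ D) {f g : Ω → ℝ} (hf : f ∈ D)
    (hg : g ∈ Gambles Ω) (hfg : f ≤ g) : g ∈ D := by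
  rw [hκ.2 D hD]
  exact ⟨hg, f, hf, hfg⟩

end Coherent

section Previsions

variable {Ω : Type*} {D : Set (Ω → ℝ)} {f : Ω → ℝ}

theorem nonempty_sub_const_mem [Nonempty Ω] (hpos : Lpos Ω ⊆ D) (hf : f ∈ Gambles Ω) :
    {μ : ℝ | (f - fun _ => μ) ∈ D}.Nonempty := by
  obtain ⟨M, hM⟩ := hf
  refine ⟨-M - 1, hpos (mem_lpos_of_pos (sub_mem_gambles ⟨M, hM⟩ (const_mem_gambles Ω _))
    fun ω => ?_)⟩
  have := (abs_le.1 (hM ω)).1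
  simp only [Pi.sub_apply]
  linarith

theorem nonempty_const_sub_mem [Nonempty Ω] (hpos : Lpos Ω ⊆ D) (hf : f ∈ Gambles Ω) :
    {μ : ℝ | ((fun _ => μ) - f) ∈ D}.Nonempty := by
  obtain ⟨M, hM⟩ := hf
  refine ⟨M + 1, hpos (mem_lpos_of_pos (sub_mem_gambles (const_mem_gambles Ω _) ⟨M, hM⟩)
    fun ω => ?_)⟩
  have := (abs_le.1 (hM ω)).2
  simp only [Pi.sub_apply]
  linarith

theorem bddAbove_sub_const_mem (hD : ∀ g ∈ D, ∃ ω, 0 < g ω) (hf : f ∈ Gambles Ω) :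
    BddAbove {μ : ℝ | (f - fun _ => μ) ∈ D} := by
  obtain ⟨M, hM⟩ := hf
  refine ⟨M, fun μ hμ => ?_⟩
  obtain ⟨ω, hω⟩ := hD _ hμ
  have := (abs_le.1 (hM ω)).2
  simp only [Pi.sub_apply] at hω
  linarith

theorem bddBelow_const_sub_mem (hD : ∀ g ∈ D, ∃ ω, 0 < g ω) (hf : f ∈ Gambles Ω) :
    BddBelow {μ : ℝ | ((fun _ => μ) - f) ∈ D} := by
  obtain ⟨M, hM⟩ := hf
  refine ⟨-M, fun μ hμ => ?_⟩
  obtain ⟨ω, hω⟩ := hD _ hμ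
  have := (abs_le.1 (hM ω)).1
  simp only [Pi.sub_apply] at hω
  linarith

theorem le_lowPrev (hD : ∀ g ∈ D, ∃ ω, 0 < g ω) (hf : f ∈ Gambles Ω) {μ : ℝ}
    (hμ : (f - fun _ => μ) ∈ D) : μ ≤ lowPrev D f :=
  le_csSup (bddAbove_sub_const_mem hD hf) hμ

theorem upPrev_le (hD : ∀ g ∈ D, ∃ ω, 0 < g ω) (hf : f ∈ Gambles Ω) {μ : ℝ}
    (hμ : ((fun _ => μ) - f) ∈ D) : upPrev D f ≤ μ :=
  csInf_le (bddBelow_const_sub_mem hD hf) hμ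

theorem upPrev_le_lowPrev (hD : ∀ g ∈ D, ∃ ω, 0 < g ω)
    (hcond : ∀ f ∈ Gambles Ω, f ∉ D → ∀ ε : ℝ, 0 < ε → ((fun _ => ε) - f) ∈ D)
    (hf : f ∈ Gambles Ω) : upPrev D f ≤ lowPrev D f := by
  refine le_of_forall_pos_le_add fun ε hε => upPrev_le hD hf ?_
  set μ := lowPrev D f + ε / 2
  have hμ : (f - fun _ => μ) ∉ D := fun h => by
    have := le_lowPrev hD hf h
    simp only [μ] at this
    linarith
  convert hcond _ (sub_mem_gambles hf (const_mem_gambles Ω μ)) hμ (ε / 2) (by linarith) using 1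
  funext ω
  simp only [Pi.sub_apply, μ]
  ring

variable (hdom : ∀ ⦃f g : Ω → ℝ⦄, f ∈ D → g ∈ Gambles Ω → f ≤ g → g ∈ D)
include hdom

theorem lowPrev_nonpos_of_notMem [Nonempty Ω] (hpos : Lpos Ω ⊆ D) (hf : f ∈ Gambles Ω)
    (hfD : f ∉ D) : lowPrev D f ≤ 0 := by
  refine csSup_le (nonempty_sub_const_mem hpos hf) fun μ hμ => ?_
  by_contra! hμpos
  exact hfD (hdom hμ hf fun ω => by simp only [Pi.sub_apply]; linarith)

theorem const_sub_mem_of_upPrev_lt [Nonempty Ω] (hpos : Lpos Ω ⊆ D) (hf : f ∈ Gambles Ω)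
    {ε : ℝ} (hε : upPrev D f < ε) : ((fun _ => ε) - f) ∈ D := by
  obtain ⟨μ, hμ, hμε⟩ := exists_lt_of_csInf_lt (nonempty_const_sub_mem hpos hf) hε
  exact hdom hμ (sub_mem_gambles (const_mem_gambles Ω ε) hf) fun ω => by
    simp only [Pi.sub_apply]; linarith

end Previsions

/-- if `P_D ≤ Q_D` on all gambles, then `P_D = Q_D` on all gambles iff
for every gamble `f ∉ D` and every `ε > 0`, `ε - f ∈ D`. -/
theorem stmt13 {Ω : Type*} [Nonempty Ω] (κ : Set (Ω → ℝ) → Set (Ω → ℝ))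
    (hκ : InKd κ) (D : Set (Ω → ℝ)) (hD : Coherent κ D)
    (hle : ∀ f ∈ Gambles Ω, lowPrev D f ≤ upPrev D f) :
    (∀ f ∈ Gambles Ω, lowPrev D f = upPrev D f) ↔
      ∀ f ∈ Gambles Ω, f ∉ D → ∀ ε : ℝ, 0 < ε → ((fun _ => ε) - f) ∈ D := by
  have hpos := hD.lpos_subset hκ.1
  have hdom : ∀ ⦃f g : Ω → ℝ⦄, f ∈ D → g ∈ Gambles Ω → f ≤ g → g ∈ D :=
    fun _ _ => hD.mem_of_le hκ
  constructor
  · intro heq f hf hfD ε hε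
    refine const_sub_mem_of_upPrev_lt hdom hpos hf ?_
    linarith [heq f hf, lowPrev_nonpos_of_notMem hdom hpos hf hfD]
  · exact fun hcond f hf =>
      (hle f hf).antisymm (upPrev_le_lowPrev (fun _ => hD.exists_pos) hcond hf)
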